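/- arXiv:1810.11145 — 6 statements merged into one kernel-verified Lean document; each statement's English description precedes it below -/
import Mathlib

section
/- Let t_r > 0 and let λ : ℝ → ℝ be a continuous, nonnegative function that is periodic with period t_r. Set Λ := ∫₀^{t_r} λ(τ) dτ and assume Λ > 0. Let t_d ≥ 0, let t ∈ ℝ, and let r₁, r₂ be natural numbers. Then the iterated integral ∫_{r₁ t_r + t + t_d}^{(r₁+1) t_r + t + t_d} λ(s) · exp(−∫_{t + t_d}^{s} λ(τ) dτ) · ( ∫_{r₂ t_r + s + t_d}^{(r₂+1) t_r + s + t_d} λ(u) · exp(−∫_{s + t_d}^{u} λ(τ) dτ) du ) ds = (1 − exp(−Λ))² · exp(−(r₁ + r₂)·Λ). -/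
/-!
The density `λ u · exp (-∫_{c}^{u} λ)` has primitive `-exp (-∫_{c}^{u} λ)`, so its integral over
a window is a difference of survival probabilities. Over `r` whole periods the accumulated
intensity is `r Λ` by periodicity, so the window `[c + r t_r, c + (r+1) t_r]` carries mass
`(1 - e^{-Λ}) e^{-rΛ}` whatever `c` is. Hence the inner integral does not depend on `s`, and the
double integral factors into two such masses.
-/

open intervalIntegral Real

theorem integral_mul_exp_neg_integral {f : ℝ → ℝ} (hf : Continuous f) (c a b : ℝ) :
    ∫ u in a..b, f u * exp (-∫ τ in c..u, f τ)
      = exp (-∫ τ in c..a, f τ) - exp (-∫ τ in c..b, f τ) := by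
  have hprim : ∀ u, HasDerivAt (fun x => ∫ τ in c..x, f τ) (f u) u := fun u =>
    integral_hasDerivAt_right (hf.intervalIntegrable _ _) (hf.stronglyMeasurableAtFilter _ _)
      hf.continuousAt
  have hderiv : ∀ u ∈ Set.uIcc a b, HasDerivAt (fun x => -exp (-∫ τ in c..x, f τ))
      (f u * exp (-∫ τ in c..u, f τ)) u := fun u _ => by
    have h : HasDerivAt (fun x => -exp (-∫ τ in c..x, f τ))
        (-(exp (-∫ τ in c..u, f τ) * -f u)) u := (hprim u).neg.exp.neg
    exact h.congr_deriv (by ring)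
  have hint : IntervalIntegrable (fun u => f u * exp (-∫ τ in c..u, f τ))
      MeasureTheory.volume a b :=
    (hf.mul (continuous_primitive (fun a b => hf.intervalIntegrable a b) c).neg.rexp
      ).intervalIntegrable _ _
  rw [integral_eq_sub_of_hasDerivAt hderiv hint]
  ring

theorem Function.Periodic.intervalIntegral_add_nat_mul_eq {f : ℝ → ℝ} {T : ℝ}
    (hper : Function.Periodic f T)
    (h_int : ∀ t₁ t₂, IntervalIntegrable f MeasureTheory.volume t₁ t₂)
    (n : ℕ) (t : ℝ) :
    ∫ x in t..t + n * T, f x = n * ∫ x in 0..T, f x := by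
  have h := hper.intervalIntegral_add_zsmul_eq n t h_int
  simp only [zsmul_eq_mul, Int.cast_natCast] at h
  rw [h, hper.intervalIntegral_add_eq t 0, zero_add]

theorem Function.Periodic.integral_mul_exp_neg_integral_nth_period {f : ℝ → ℝ} {T : ℝ}
    (hper : Function.Periodic f T) (hf : Continuous f) (r : ℕ) (c : ℝ) :
    ∫ u in (r * T + c)..((r + 1) * T + c), f u * exp (-∫ τ in c..u, f τ)
      = (1 - exp (-∫ x in 0..T, f x)) * exp (-(r * ∫ x in 0..T, f x)) := by
  have hstart : (r : ℝ) * T + c = c + r * T := add_comm _ _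
  have hend : ((r : ℝ) + 1) * T + c = c + (r + 1 : ℕ) * T := by push_cast; ring
  have h_int := fun t₁ t₂ => hf.intervalIntegrable (μ := MeasureTheory.volume) t₁ t₂
  rw [integral_mul_exp_neg_integral hf, hstart, hend, hper.intervalIntegral_add_nat_mul_eq h_int,
    hper.intervalIntegral_add_nat_mul_eq h_int, Nat.cast_succ, add_mul, one_mul, neg_add, exp_add]
  ring

theorem interdetection_periods_joint_geometric_general
    (tr : ℝ) (lam : ℝ → ℝ) (hcont : Continuous lam)
    (hper : Function.Periodic lam tr)
    (Λ : ℝ) (hΛdef : Λ = ∫ τ in (0 : ℝ)..tr, lam τ)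
    (td : ℝ) (t : ℝ) (r₁ r₂ : ℕ) :
    (∫ s in (r₁ * tr + t + td)..((r₁ + 1) * tr + t + td),
        lam s * Real.exp (-(∫ τ in (t + td)..s, lam τ)) *
          (∫ u in (r₂ * tr + s + td)..((r₂ + 1) * tr + s + td),
            lam u * Real.exp (-(∫ τ in (s + td)..u, lam τ))))
      = (1 - Real.exp (-Λ)) ^ 2 * Real.exp (-((r₁ + r₂ : ℝ) * Λ)) := by
  subst hΛdef
  simp only [add_assoc, hper.integral_mul_exp_neg_integral_nth_period hcont, integral_mul_const]
  rw [add_mul, neg_add, exp_add]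
  ring

/-- Interdetection period counts of consecutive detections are independent and
geometric: the joint probability that the next two detections fall `r₁` and `r₂`
complete periods (respectively) after the detector reactivates is
`(1 − e^{−Λ})² e^{−(r₁+r₂)Λ}`. -/
theorem interdetection_periods_joint_geometric
    (tr : ℝ) (htr : 0 < tr) (lam : ℝ → ℝ) (hcont : Continuous lam)
    (hnn : ∀ s, 0 ≤ lam s) (hper : Function.Periodic lam tr)
    (Λ : ℝ) (hΛdef : Λ = ∫ τ in (0 : ℝ)..tr, lam τ) (hΛ : 0 < Λ)
    (td : ℝ) (htd : 0 ≤ td) (t : ℝ) (r₁ r₂ : ℕ) :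
    (∫ s in (r₁ * tr + t + td)..((r₁ + 1) * tr + t + td),
        lam s * Real.exp (-(∫ τ in (t + td)..s, lam τ)) *
          (∫ u in (r₂ * tr + s + td)..((r₂ + 1) * tr + s + td),
            lam u * Real.exp (-(∫ τ in (s + td)..u, lam τ))))
      = (1 - Real.exp (-Λ)) ^ 2 * Real.exp (-((r₁ + r₂ : ℝ) * Λ)) :=
  interdetection_periods_joint_geometric_general tr lam hcont hper Λ hΛdef td t r₁ r₂
end

section
/- Let t_r > 0 and let λ : ℝ → ℝ be a continuous, nonnegative function that is periodic with period t_r. Set Λ := ∫₀^{t_r} λ(τ) dτ and assume Λ > 0. Then for every x ∈ [0, t_r], ∫₀^x λ(y) · exp(−∫_y^x λ(τ) dτ) dy + ∫_x^{t_r} λ(y) · exp(−∫_y^{t_r + x} λ(τ) dτ) dy = 1 − exp(−Λ). -/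
open intervalIntegral

lemma key_integral (lam : ℝ → ℝ) (hcont : Continuous lam) (a b c : ℝ) :
    (∫ y in a..b, lam y * Real.exp (-(∫ τ in y..c, lam τ)))
      = Real.exp (-(∫ τ in b..c, lam τ)) - Real.exp (-(∫ τ in a..c, lam τ)) := by
  have hderiv : ∀ y ∈ Set.uIcc a b,
      HasDerivAt (fun u => Real.exp (-(∫ τ in u..c, lam τ)))
        (lam y * Real.exp (-(∫ τ in y..c, lam τ))) y := by
    intro y _
    have h1 : HasDerivAt (fun u => ∫ τ in u..c, lam τ) (-lam y) y :=
      intervalIntegral.integral_hasDerivAt_left (hcont.intervalIntegrable _ _)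
        (hcont.stronglyMeasurableAtFilter _ _) hcont.continuousAt
    have h2 := (h1.neg.exp)
    simpa [mul_comm] using h2
  have hint : IntervalIntegrable
      (fun y => lam y * Real.exp (-(∫ τ in y..c, lam τ))) MeasureTheory.volume a b := by
    have hprim : Continuous fun u : ℝ => ∫ τ in u..c, lam τ := by
      have h : Continuous fun u : ℝ => ∫ τ in c..u, lam τ :=
        intervalIntegral.continuous_primitive (fun t₁ t₂ => hcont.intervalIntegrable _ _) c
      have heq : (fun u : ℝ => ∫ τ in u..c, lam τ) = fun u => -(∫ τ in c..u, lam τ) := by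
        funext u; rw [intervalIntegral.integral_symm]
      rw [heq]; exact h.neg
    exact (hcont.mul (Real.continuous_exp.comp hprim.neg)).intervalIntegrable _ _
  have := intervalIntegral.integral_eq_sub_of_hasDerivAt hderiv hint
  simpa using this

/-- The key computation `A₁ + A₂ = 1` (after normalization by `1 − e^{−Λ}`) in the
proof that the arrival density is stationary when the dead time is a multiple of
the repetition period. -/
theorem stationarity_integral_identity
    (tr : ℝ) (htr : 0 < tr) (lam : ℝ → ℝ) (hcont : Continuous lam)
    (hnn : ∀ t, 0 ≤ lam t) (hper : Function.Periodic lam tr)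
    (Λ : ℝ) (hΛdef : Λ = ∫ τ in (0 : ℝ)..tr, lam τ) (hΛ : 0 < Λ) :
    ∀ x ∈ Set.Icc (0 : ℝ) tr,
      (∫ y in (0 : ℝ)..x, lam y * Real.exp (-(∫ τ in y..x, lam τ)))
        + (∫ y in x..tr, lam y * Real.exp (-(∫ τ in y..(tr + x), lam τ)))
        = 1 - Real.exp (-Λ) := by
  intro x _
  rw [key_integral lam hcont 0 x x, key_integral lam hcont x tr (tr + x)]
  have hint : ∀ t₁ t₂, IntervalIntegrable lam MeasureTheory.volume t₁ t₂ :=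
    fun _ _ => hcont.intervalIntegrable _ _
  have h1 : (∫ τ in tr..(tr + x), lam τ) = ∫ τ in (0:ℝ)..x, lam τ := by
    have := hper.intervalIntegral_add_eq_add 0 x hint
    have h2 := intervalIntegral.integral_add_adjacent_intervals (hint 0 tr) (hint tr (tr + x))
    have h3 : (∫ τ in (0:ℝ)..(x + tr), lam τ) = (∫ τ in (0:ℝ)..(tr + x), lam τ) := by
      rw [add_comm]
    have h4 : (∫ x_1 in (0:ℝ)..(0 + tr), lam x_1) = ∫ τ in (0:ℝ)..tr, lam τ := by
      norm_num
    rw [h3, ← h2, h4] at this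
    linarith
  have h2 : (∫ τ in x..(tr + x), lam τ) = Λ := by
    rw [hΛdef]
    have := hper.intervalIntegral_add_eq x 0
    simpa [add_comm] using this
  rw [h1, h2]
  have h3 : (∫ τ in x..x, lam τ) = 0 := intervalIntegral.integral_same
  rw [h3]
  ring_nf
  simp [Real.exp_zero]
end

section
/- Let t_r > 0 and let λ : ℝ → ℝ be a continuous, nonnegative function that is periodic with period t_r. Set Λ := ∫₀^{t_r} λ(τ) dτ and assume Λ > 0. For x, x' ∈ [0, t_r), define the transition kernel with x_d = 0: k(x' | x) := λ(x') / (1 − exp(−Λ)) · exp(−∫_x^{x'} λ(τ) dτ) if x < x', and k(x' | x) := λ(x') / (1 − exp(−Λ)) · exp(−∫_x^{t_r + x'} λ(τ) dτ) if x ≥ x'. Then the probability density f(x) := λ(x)/Λ on [0, t_r) is stationary for this kernel: for every x' ∈ [0, t_r), ∫₀^{t_r} (λ(x)/Λ) · k(x' | x) dx = λ(x')/Λ. -/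
open intervalIntegral

/-- When the dead time is an integer multiple of the repetition period (`x_d = 0`),
the arrival density `λ(x)/Λ` is stationary for the detection-time Markov chain. -/
theorem arrival_density_stationary_xd_zero
    (tr : ℝ) (htr : 0 < tr) (lam : ℝ → ℝ) (hcont : Continuous lam)
    (hnn : ∀ t, 0 ≤ lam t) (hper : Function.Periodic lam tr)
    (Λ : ℝ) (hΛdef : Λ = ∫ τ in (0 : ℝ)..tr, lam τ) (hΛ : 0 < Λ) :
    ∀ x' ∈ Set.Ico (0 : ℝ) tr,
      (∫ x in (0 : ℝ)..tr,
        (lam x / Λ) *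
          (if x < x' then
            lam x' / (1 - Real.exp (-Λ)) * Real.exp (-(∫ τ in x..x', lam τ))
          else
            lam x' / (1 - Real.exp (-Λ)) * Real.exp (-(∫ τ in x..(tr + x'), lam τ))))
        = lam x' / Λ := by
  intro x' hx'
  obtain ⟨hx0, hxtr⟩ := hx'
  set G : ℝ → ℝ := fun x => ∫ τ in (0:ℝ)..x, lam τ with hGdef
  have hint : ∀ a b : ℝ, IntervalIntegrable lam MeasureTheory.volume a b :=
    fun a b => hcont.intervalIntegrable a b
  have hGsub : ∀ a b : ℝ, (∫ τ in a..b, lam τ) = G b - G a := by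
    intro a b
    rw [eq_sub_iff_add_eq, hGdef]
    simp only []
    rw [add_comm, integral_add_adjacent_intervals (hint 0 a) (hint a b)]
  -- derivative of G
  have hGd : ∀ x : ℝ, HasDerivAt G (lam x) x := by
    intro x
    exact integral_hasDerivAt_right (hint 0 x)
      (hcont.aestronglyMeasurable.stronglyMeasurableAtFilter) hcont.continuousAt
  have hFTC : ∀ a b : ℝ, (∫ x in a..b, lam x * Real.exp (G x))
      = Real.exp (G b) - Real.exp (G a) := by
    intro a b
    have : ∀ x : ℝ, HasDerivAt (fun y => Real.exp (G y)) (lam x * Real.exp (G x)) x := by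
      intro x
      simpa [mul_comm] using (hGd x).exp
    exact integral_eq_sub_of_hasDerivAt (fun x _ => this x)
      ((hcont.mul (Real.continuous_exp.comp (continuous_primitive hint 0))).intervalIntegrable a b)
  have hGcont : Continuous G := continuous_primitive hint 0
  have hG0 : G 0 = 0 := by simp [hGdef]
  have hGtr : G tr = Λ := hΛdef.symm
  have hGper : G (tr + x') = Λ + G x' := by
    have h1 : (∫ τ in tr..(tr + x'), lam τ) = ∫ τ in (0:ℝ)..x', lam τ := by
      calc (∫ τ in tr..(tr + x'), lam τ) = ∫ τ in (0+tr)..(x'+tr), lam τ := by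
            congr 1 <;> ring
        _ = ∫ τ in (0:ℝ)..x', lam (τ + tr) := (integral_comp_add_right lam tr).symm
        _ = ∫ τ in (0:ℝ)..x', lam τ := by simp only [hper _]
    have h2 := hGsub tr (tr + x')
    rw [h1] at h2
    have h3 : G x' = G (tr + x') - G tr := by simpa [hGdef] using h2
    rw [hGtr] at h3; linarith
  -- rewrite integrand
  have hpt : ∀ x : ℝ, (lam x / Λ) *
          (if x < x' then
            lam x' / (1 - Real.exp (-Λ)) * Real.exp (-(∫ τ in x..x', lam τ))
          else
            lam x' / (1 - Real.exp (-Λ)) * Real.exp (-(∫ τ in x..(tr + x'), lam τ)))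
      = (lam x' / (1 - Real.exp (-Λ)) / Λ) *
          ((lam x * Real.exp (G x)) *
            (if x < x' then Real.exp (-(G x')) else Real.exp (-(Λ + G x')))) := by
    intro x
    by_cases h : x < x' <;>
      simp only [h, if_true, if_false, hGsub]
    · rw [show -(G x' - G x) = G x + -(G x') by ring, Real.exp_add]; ring
    · rw [hGper, show -(Λ + G x' - G x) = G x + -(Λ + G x') by ring, Real.exp_add]; ring
  simp only [hpt]
  rw [integral_const_mul]
  -- the piecewise function
  set g : ℝ → ℝ := fun x => (lam x * Real.exp (G x)) *
      (if x < x' then Real.exp (-(G x')) else Real.exp (-(Λ + G x'))) with hg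
  set f1 : ℝ → ℝ := fun x => (lam x * Real.exp (G x)) * Real.exp (-(G x')) with hf1
  set f2 : ℝ → ℝ := fun x => (lam x * Real.exp (G x)) * Real.exp (-(Λ + G x')) with hf2
  have hcont1 : Continuous f1 := ((hcont.mul (Real.continuous_exp.comp hGcont)).mul continuous_const)
  have hcont2 : Continuous f2 := ((hcont.mul (Real.continuous_exp.comp hGcont)).mul continuous_const)
  have hae : ∀ᵐ x : ℝ, x ≠ x' := by
    have := MeasureTheory.compl_mem_ae_iff.mpr (MeasureTheory.measure_singleton x' (μ := MeasureTheory.volume))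
    simpa [Set.compl_singleton_eq, Filter.eventually_iff] using this
  have hg1 : IntervalIntegrable g MeasureTheory.volume 0 x' := by
    rw [intervalIntegrable_iff_integrableOn_Ioc_of_le hx0]
    refine ((hcont1.integrableOn_Ioc)).congr ?_
    refine ((MeasureTheory.ae_restrict_of_ae hae).and
      (MeasureTheory.ae_restrict_mem measurableSet_Ioc)).mono ?_
    rintro x ⟨hne, hmem⟩
    have : x < x' := lt_of_le_of_ne hmem.2 hne
    simp [hg, hf1, this]
  have hg2 : IntervalIntegrable g MeasureTheory.volume x' tr := by
    rw [intervalIntegrable_iff_integrableOn_Ioc_of_le hxtr.le]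
    refine ((hcont2.integrableOn_Ioc)).congr ?_
    refine (MeasureTheory.ae_restrict_mem measurableSet_Ioc).mono ?_
    intro x hmem
    simp [hg, hf2, not_lt.mpr hmem.1.le]
  rw [← integral_add_adjacent_intervals hg1 hg2]
  have hI1 : (∫ x in (0:ℝ)..x', g x) = ∫ x in (0:ℝ)..x', f1 x := by
    refine integral_congr_ae (hae.mono ?_)
    intro x hne hmem
    rw [Set.uIoc_of_le hx0] at hmem
    have : x < x' := lt_of_le_of_ne hmem.2 hne
    simp [hg, hf1, this]
  have hI2 : (∫ x in x'..tr, g x) = ∫ x in x'..tr, f2 x := by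
    refine integral_congr ?_
    intro x hmem
    rw [Set.uIcc_of_le hxtr.le] at hmem
    simp [hg, hf2, not_lt.mpr hmem.1]
  rw [hI1, hI2]
  have hv1 : (∫ x in (0:ℝ)..x', f1 x)
      = (Real.exp (G x') - 1) * Real.exp (-(G x')) := by
    rw [hf1]
    rw [integral_mul_const, hFTC, hG0, Real.exp_zero]
  have hv2 : (∫ x in x'..tr, f2 x)
      = (Real.exp Λ - Real.exp (G x')) * Real.exp (-(Λ + G x')) := by
    rw [hf2]
    rw [integral_mul_const, hFTC, hGtr]
  rw [hv1, hv2]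
  -- final algebra
  have hne1 : (1 : ℝ) - Real.exp (-Λ) ≠ 0 := by
    have : Real.exp (-Λ) < 1 := Real.exp_lt_one_iff.mpr (by linarith)
    linarith
  have he1 : Real.exp (-(G x')) * Real.exp (G x') = 1 := by
    rw [← Real.exp_add]; simp
  have he2 : Real.exp (-(Λ + G x')) = Real.exp (-Λ) * Real.exp (-(G x')) := by
    rw [← Real.exp_add]; ring_nf
  have he3 : Real.exp Λ * Real.exp (-Λ) = 1 := by
    rw [← Real.exp_add]; simp
  have key : (Real.exp (G x') - 1) * Real.exp (-(G x'))
      + (Real.exp Λ - Real.exp (G x')) * Real.exp (-(Λ + G x'))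
      = 1 - Real.exp (-Λ) := by
    rw [he2]
    linear_combination (1 - Real.exp (-Λ)) * he1 + Real.exp (-(G x')) * he3
  rw [key]
  field_simp
end

section
/- Let t_r > 0 and let λ : ℝ → ℝ be a continuous, nonnegative function that is periodic with period t_r. Set Λ := ∫₀^{t_r} λ(τ) dτ and assume Λ > 0. Let x_d ∈ [0, t_r), let K be a natural number, and let x, x' ∈ ℝ satisfy 0 ≤ x and x + x_d ≤ x' ≤ t_r. Set c := K·t_r + x + x_d. Then ∫_c^{K·t_r + x'} λ(t) · exp(−∫_c^t λ(τ) dτ) dt + Σ_{k=K+1}^{∞} ∫_{k·t_r}^{k·t_r + x'} λ(t) · exp(−∫_c^t λ(τ) dτ) dt = ∫_{x + x_d}^{x'} λ(t) · exp(−∫_{x + x_d}^{t} λ(τ) dτ) dt + (1 − exp(−Λ))⁻¹ · ∫₀^{x'} λ(t) · exp(−∫_{x + x_d}^{t_r + t} λ(τ) dτ) dt. In particular, the left-hand side does not depend on K. -/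
open intervalIntegral

/-- The conditional probability that the next detection time modulo `t_r` is at most
`x'`, given that the detector reactivates at absolute time `c = K·t_r + x + x_d`,
does not depend on `K`: it equals
`∫_{x+x_d}^{x'} λ e^{−∫λ} + (1 − e^{−Λ})⁻¹ ∫_0^{x'} λ(t) e^{−∫_{x+x_d}^{t_r+t} λ} dt`.
This is the core computation (`S₁ + S₂`) of Proposition 1 of the paper. -/
theorem next_detection_distribution_independent_of_period
    (tr : ℝ) (htr : 0 < tr) (lam : ℝ → ℝ) (hcont : Continuous lam)
    (hnn : ∀ t, 0 ≤ lam t) (hper : Function.Periodic lam tr)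
    (Λ : ℝ) (hΛdef : Λ = ∫ τ in (0 : ℝ)..tr, lam τ) (hΛ : 0 < Λ)
    (xd : ℝ) (hxd : xd ∈ Set.Ico (0 : ℝ) tr)
    (K : ℕ) (x x' : ℝ) (hx : 0 ≤ x) (hxx' : x + xd ≤ x') (hx' : x' ≤ tr) :
    Summable (fun j : ℕ =>
        ∫ t in (((K : ℝ) + 1 + j) * tr)..(((K : ℝ) + 1 + j) * tr + x'),
          lam t * Real.exp (-(∫ τ in ((K : ℝ) * tr + x + xd)..t, lam τ))) ∧
    (∫ t in ((K : ℝ) * tr + x + xd)..((K : ℝ) * tr + x'),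
        lam t * Real.exp (-(∫ τ in ((K : ℝ) * tr + x + xd)..t, lam τ)))
      + (∑' j : ℕ,
          ∫ t in (((K : ℝ) + 1 + j) * tr)..(((K : ℝ) + 1 + j) * tr + x'),
            lam t * Real.exp (-(∫ τ in ((K : ℝ) * tr + x + xd)..t, lam τ)))
      = (∫ t in (x + xd)..x', lam t * Real.exp (-(∫ τ in (x + xd)..t, lam τ)))
        + (1 - Real.exp (-Λ))⁻¹ *
            ∫ t in (0 : ℝ)..x',
              lam t * Real.exp (-(∫ τ in (x + xd)..(tr + t), lam τ)) := by
  have hInt : ∀ a b : ℝ, IntervalIntegrable lam MeasureTheory.volume a b :=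
    fun a b => hcont.intervalIntegrable a b
  -- shift invariance of the integral of lam
  have hshift : ∀ a b : ℝ, (∫ t in (a + tr)..(b + tr), lam t) = ∫ t in a..b, lam t := by
    intro a b
    rw [← intervalIntegral.integral_comp_add_right lam tr]
    simp only [hper _]
  have hshiftn : ∀ (n : ℕ) (a b : ℝ),
      (∫ t in (a + n * tr)..(b + n * tr), lam t) = ∫ t in a..b, lam t := by
    intro n
    induction n with
    | zero => intro a b; simp
    | succ n ih =>
      intro a b
      have h1 : a + ((n : ℝ) + 1) * tr = (a + n * tr) + tr := by ring
      have h2 : b + ((n : ℝ) + 1) * tr = (b + n * tr) + tr := by ring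
      push_cast
      rw [h1, h2, hshift, ih]
  -- integral over one period is Λ
  have hΛper : ∀ a : ℝ, (∫ t in a..(a + tr), lam t) = Λ := by
    intro a
    rw [hΛdef, hper.intervalIntegral_add_eq a 0, zero_add]
  -- integral over j periods is j * Λ
  have hmult : ∀ (j : ℕ) (a : ℝ), (∫ t in a..(a + j * tr), lam t) = j * Λ := by
    intro j
    induction j with
    | zero => intro a; simp
    | succ j ih =>
      intro a
      have hb : a + ((j : ℝ) + 1) * tr = (a + j * tr) + tr := by ring
      push_cast
      rw [hb, ← intervalIntegral.integral_add_adjacent_intervals (hInt a (a + j * tr))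
        (hInt (a + j * tr) (a + j * tr + tr)), ih, hΛper]
      ring
  set c : ℝ := (K : ℝ) * tr + x + xd with hc
  set I : ℝ := ∫ t in (0 : ℝ)..x', lam t * Real.exp (-(∫ τ in (x + xd)..(tr + t), lam τ)) with hI
  set r : ℝ := Real.exp (-Λ) with hr
  have hr0 : 0 ≤ r := Real.exp_nonneg _
  have hr1 : r < 1 := by
    rw [hr, Real.exp_lt_one_iff]
    linarith
  -- the first integral
  have h1 : (∫ t in c..((K : ℝ) * tr + x'),
        lam t * Real.exp (-(∫ τ in c..t, lam τ)))
      = ∫ t in (x + xd)..x', lam t * Real.exp (-(∫ τ in (x + xd)..t, lam τ)) := by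
    have hcb : c = (x + xd) + (K : ℝ) * tr := by rw [hc]; ring
    have hcb' : (K : ℝ) * tr + x' = x' + (K : ℝ) * tr := by ring
    rw [hcb, hcb',
      ← intervalIntegral.integral_comp_add_right
        (fun t => lam t * Real.exp (-(∫ τ in (x + xd + (K : ℝ) * tr)..t, lam τ)))
        ((K : ℝ) * tr)]
    apply intervalIntegral.integral_congr
    intro t _
    simp only
    rw [hper.nat_mul K t, show x + xd + (K : ℝ) * tr = (x + xd) + (K : ℝ) * tr from rfl,
      hshiftn K (x + xd) t]
  -- each tail term
  have h2 : ∀ j : ℕ, (∫ t in (((K : ℝ) + 1 + j) * tr)..(((K : ℝ) + 1 + j) * tr + x'),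
        lam t * Real.exp (-(∫ τ in c..t, lam τ))) = r ^ j * I := by
    intro j
    set d : ℝ := ((K : ℝ) + 1 + j) * tr with hdd
    have key := intervalIntegral.integral_comp_add_right
      (a := 0) (b := x')
      (fun t => lam t * Real.exp (-(∫ τ in c..t, lam τ))) d
    simp only [zero_add] at key
    rw [show d + x' = x' + d from add_comm d x', ← key]
    have hpt : ∀ t : ℝ, lam (t + ((K : ℝ) + 1 + j) * tr) *
        Real.exp (-(∫ τ in c..(t + ((K : ℝ) + 1 + j) * tr), lam τ))
        = r ^ j * (lam t * Real.exp (-(∫ τ in (x + xd)..(tr + t), lam τ))) := by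
      intro t
      have hlam : lam (t + ((K : ℝ) + 1 + j) * tr) = lam t := by
        have := (hper.nat_mul (K + 1 + j)) t
        have hcast : ((K + 1 + j : ℕ) : ℝ) = (K : ℝ) + 1 + j := by push_cast; ring
        rwa [hcast] at this
      have hsplit : (∫ τ in c..(t + ((K : ℝ) + 1 + j) * tr), lam τ)
          = (∫ τ in (x + xd)..(tr + t), lam τ) + j * Λ := by
        have hb1 : c = (x + xd) + (K : ℝ) * tr := by rw [hc]; ring
        have hb2 : t + ((K : ℝ) + 1 + j) * tr = (t + (1 + (j : ℝ)) * tr) + (K : ℝ) * tr := by ring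
        rw [hb1, hb2, hshiftn K (x + xd) (t + (1 + (j : ℝ)) * tr),
          ← intervalIntegral.integral_add_adjacent_intervals
            (hInt (x + xd) (tr + t)) (hInt (tr + t) (t + (1 + (j : ℝ)) * tr))]
        have hb3 : t + (1 + (j : ℝ)) * tr = (tr + t) + j * tr := by ring
        rw [hb3, hmult j (tr + t)]
      rw [hlam, hsplit, neg_add, Real.exp_add]
      rw [show -((j : ℝ) * Λ) = (j : ℝ) * (-Λ) by ring, Real.exp_nat_mul, ← hr]
      ring
    rw [intervalIntegral.integral_congr (fun t _ => hpt t),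
      intervalIntegral.integral_const_mul]
  have hsum : Summable (fun j : ℕ => r ^ j * I) :=
    (summable_geometric_of_lt_one hr0 hr1).mul_right I
  constructor
  · simpa only [h2] using hsum
  · rw [h1]
    have : (∑' j : ℕ, ∫ t in (((K : ℝ) + 1 + j) * tr)..(((K : ℝ) + 1 + j) * tr + x'),
        lam t * Real.exp (-(∫ τ in c..t, lam τ))) = (1 - r)⁻¹ * I := by
      rw [tsum_congr h2, tsum_mul_right, tsum_geometric_of_lt_one hr0 hr1]
    rw [this]
end

section
/- Let t_r > 0, x_d ∈ [0, t_r), and let λ, a : ℝ → ℝ be continuous functions, both periodic with period t_r, with λ nonnegative. Set Λ := ∫₀^{t_r} λ(τ) dτ and assume Λ > 0. Suppose that for every x ∈ ℝ, a(x) = (1 − exp(−Λ))⁻¹ · ∫_{x − x_d − t_r}^{x − x_d} λ(y) · a(y) · exp(−∫_{y + x_d}^{x} λ(τ) dτ) dy. Then a is differentiable on ℝ and a'(x) = λ(x − x_d)·a(x − x_d) − λ(x)·a(x) for every x ∈ ℝ. -/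
open intervalIntegral

/-!
Writing `L` for a primitive of `λ`, the kernel factors as
`exp (-∫_{y+x_d}^x λ) = exp (-L x) · exp (L (y + x_d))`, so the right-hand side of the integral
equation is `exp (-L x)` times an integral with moving limits and an `x`-free integrand. Both
factors are differentiable. By periodicity, the boundary term at the lower limit carries the
factor `exp (-Λ)`, and it combines with the upper one to cancel the normalisation
`(1 - exp (-Λ))⁻¹`.
-/

section KernelIntegral

variable {lam g : ℝ → ℝ}

lemma exp_neg_integral_eq_mul (hlam : Continuous lam) (u x : ℝ) :
    Real.exp (-∫ τ in u..x, lam τ) =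
      Real.exp (-∫ τ in (0 : ℝ)..x, lam τ) * Real.exp (∫ τ in (0 : ℝ)..u, lam τ) := by
  rw [← integral_interval_sub_left (hlam.intervalIntegrable 0 x) (hlam.intervalIntegrable 0 u),
    neg_sub, Real.exp_sub, Real.exp_neg, div_eq_inv_mul]

lemma integral_mul_exp_neg_integral_eq (hlam : Continuous lam) (d x u v : ℝ) :
    ∫ y in u..v, g y * Real.exp (-∫ τ in (y + d)..x, lam τ) =
      Real.exp (-∫ τ in (0 : ℝ)..x, lam τ) *
        ∫ y in u..v, g y * Real.exp (∫ τ in (0 : ℝ)..(y + d), lam τ) := by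
  rw [← integral_const_mul]
  refine integral_congr fun y _ => ?_
  rw [exp_neg_integral_eq_mul hlam (y + d) x]
  ring

lemma hasDerivAt_integral_mul_exp_neg_integral (hlam : Continuous lam) (hg : Continuous g)
    (d p x : ℝ) :
    HasDerivAt (fun x => ∫ y in (x - d - p)..(x - d), g y * Real.exp (-∫ τ in (y + d)..x, lam τ))
      (g (x - d) - g (x - d - p) * Real.exp (-∫ τ in (x - p)..x, lam τ) -
        lam x * ∫ y in (x - d - p)..(x - d), g y * Real.exp (-∫ τ in (y + d)..x, lam τ)) x := by
  set L : ℝ → ℝ := fun t => ∫ τ in (0 : ℝ)..t, lam τ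
  set G : ℝ → ℝ := fun y => g y * Real.exp (L (y + d))
  have hGc : Continuous G :=
    hg.mul (Real.continuous_exp.comp ((continuous_primitive (fun _ _ => hlam.intervalIntegrable _ _)
      0).comp (continuous_add_const d)))
  set H : ℝ → ℝ := fun t => ∫ y in (0 : ℝ)..t, G y
  have hF : (fun x => ∫ y in (x - d - p)..(x - d), g y * Real.exp (-∫ τ in (y + d)..x, lam τ)) =
      fun x => Real.exp (-L x) * (H (x - d) - H (x - d - p)) := by
    ext x
    rw [integral_mul_exp_neg_integral_eq hlam,
      integral_interval_sub_left (hGc.intervalIntegrable _ _) (hGc.intervalIntegrable _ _)]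
  have hE : HasDerivAt (fun x => Real.exp (-L x)) (Real.exp (-L x) * -lam x) x :=
    ((hlam.integral_hasStrictDerivAt 0 x).hasDerivAt.neg).exp
  have hH : ∀ c, HasDerivAt (fun x => H (x - c)) (G (x - c)) x := fun c =>
    (hGc.integral_hasStrictDerivAt 0 (x - c)).hasDerivAt.comp_sub_const x c
  have hH' : HasDerivAt (fun x => H (x - d - p)) (G (x - d - p)) x := by
    simpa only [sub_sub] using hH (d + p)
  have hupper : Real.exp (-L x) * G (x - d) = g (x - d) := by
    simp only [G, sub_add_cancel, mul_left_comm _ (g _), ← Real.exp_add, neg_add_cancel,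
      Real.exp_zero, mul_one]
  have hlower : Real.exp (-L x) * G (x - d - p) =
      g (x - d - p) * Real.exp (-∫ τ in (x - p)..x, lam τ) := by
    simp only [G, L, show x - d - p + d = x - p by ring]
    rw [exp_neg_integral_eq_mul hlam (x - p) x]
    ring
  rw [hF, congrFun hF x]
  refine (hE.mul ((hH d).sub hH')).congr_deriv ?_
  rw [Pi.sub_apply, mul_sub (Real.exp _) (G _), hupper, hlower]
  ring

end KernelIntegral

theorem attenuation_delay_ode_general
    (tr : ℝ) (xd : ℝ)
    (lam a : ℝ → ℝ) (hlamc : Continuous lam) (hac : Continuous a)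
    (hlamper : Function.Periodic lam tr) (haper : Function.Periodic a tr)
    (Λ : ℝ) (hΛdef : Λ = ∫ τ in (0 : ℝ)..tr, lam τ) (hΛ : 0 < Λ)
    (hstat : ∀ x : ℝ,
      a x = (1 - Real.exp (-Λ))⁻¹ *
        ∫ y in (x - xd - tr)..(x - xd),
          lam y * a y * Real.exp (-(∫ τ in (y + xd)..x, lam τ))) :
    ∀ x : ℝ, HasDerivAt a (lam (x - xd) * a (x - xd) - lam x * a x) x := by
  intro x
  have hden : 1 - Real.exp (-Λ) ≠ 0 := (sub_pos.2 (Real.exp_lt_one_iff.2 (neg_neg_of_pos hΛ))).ne'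
  have hperiod : ∫ τ in (x - tr)..x, lam τ = Λ := by
    simpa [hΛdef] using hlamper.intervalIntegral_add_eq (x - tr) 0
  have hshift : lam (x - xd - tr) * a (x - xd - tr) = lam (x - xd) * a (x - xd) := by
    rw [hlamper.sub_eq, haper.sub_eq]
  have hintegral := hasDerivAt_integral_mul_exp_neg_integral (g := fun y => lam y * a y) hlamc
    (hlamc.mul hac) xd tr x
  refine ((hintegral.const_mul _).congr_of_eventuallyEq (.of_forall hstat)).congr_deriv ?_
  rw [hshift, hperiod, hstat x]
  field_simp

/-- The dead-time attenuation factor `a` satisfying the stationarity integral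
equation is differentiable and satisfies the delay differential equation
`a'(x) = λ(x − x_d)a(x − x_d) − λ(x)a(x)` (equations (19)–(20) of the paper). -/
theorem attenuation_delay_ode
    (tr : ℝ) (htr : 0 < tr) (xd : ℝ) (hxd : xd ∈ Set.Ico (0 : ℝ) tr)
    (lam a : ℝ → ℝ) (hlamc : Continuous lam) (hac : Continuous a)
    (hlamper : Function.Periodic lam tr) (haper : Function.Periodic a tr)
    (hnn : ∀ t, 0 ≤ lam t)
    (Λ : ℝ) (hΛdef : Λ = ∫ τ in (0 : ℝ)..tr, lam τ) (hΛ : 0 < Λ)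
    (hstat : ∀ x : ℝ,
      a x = (1 - Real.exp (-Λ))⁻¹ *
        ∫ y in (x - xd - tr)..(x - xd),
          lam y * a y * Real.exp (-(∫ τ in (y + xd)..x, lam τ))) :
    ∀ x : ℝ, HasDerivAt a (lam (x - xd) * a (x - xd) - lam x * a x) x :=
  attenuation_delay_ode_general tr xd lam a hlamc hac hlamper haper Λ hΛdef hΛ hstat
end

section
/- Let t_r > 0 and Λ > 0, and let f, g : [0, t_r] → ℝ be continuous functions with f ≥ 0, g ≥ 0, ∫₀^{t_r} f(x) dx = 1, and ∫₀^{t_r} f(x)·g(x) dx > 0. Define the feasible set 𝒞 := {C ∈ ℝ : (1 + C)/Λ > g(x) for all x ∈ [0, t_r]} and, for C ∈ 𝒞, φ(C) := ∫₀^{t_r} f(x)·g(x) / ((1 + C)/Λ − g(x)) dx. Then φ is strictly decreasing on 𝒞, φ(C) → 0 as C → ∞, and the fixed-point equation φ(C) = C has at most one solution in 𝒞. -/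
open intervalIntegral

/-- The feasible set `𝒞 = {C : (1 + C)/Λ > g(x) for all x ∈ [0, t_r]}` for the
fixed-point equation of the initialization scheme. -/
def feasibleSet (tr Λ : ℝ) (g : ℝ → ℝ) : Set ℝ :=
  {C : ℝ | ∀ x ∈ Set.Icc (0 : ℝ) tr, g x < (1 + C) / Λ}

/-- The map `φ(C) = ∫₀^{t_r} f·g / ((1 + C)/Λ − g)`. -/
noncomputable def phiMap (tr Λ : ℝ) (f g : ℝ → ℝ) (C : ℝ) : ℝ :=
  ∫ x in (0 : ℝ)..tr, f x * g x / ((1 + C) / Λ - g x)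

/-- `φ` is strictly decreasing on `𝒞`, tends to `0` at infinity, and the
fixed-point equation `φ(C) = C` has at most one solution in `𝒞`
(initialization scheme, equations (30)–(31) of the paper). -/
theorem fixed_point_unique
    (tr Λ : ℝ) (htr : 0 < tr) (hΛ : 0 < Λ)
    (f g : ℝ → ℝ)
    (hfc : ContinuousOn f (Set.Icc 0 tr)) (hgc : ContinuousOn g (Set.Icc 0 tr))
    (hfnn : ∀ x ∈ Set.Icc (0 : ℝ) tr, 0 ≤ f x)
    (hgnn : ∀ x ∈ Set.Icc (0 : ℝ) tr, 0 ≤ g x)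
    (hfint : (∫ x in (0 : ℝ)..tr, f x) = 1)
    (hfg : 0 < ∫ x in (0 : ℝ)..tr, f x * g x) :
    StrictAntiOn (phiMap tr Λ f g) (feasibleSet tr Λ g) ∧
    Filter.Tendsto (phiMap tr Λ f g) Filter.atTop (nhds 0) ∧
    ∀ C₁ ∈ feasibleSet tr Λ g, ∀ C₂ ∈ feasibleSet tr Λ g,
      phiMap tr Λ f g C₁ = C₁ → phiMap tr Λ f g C₂ = C₂ → C₁ = C₂ := by
  have huIcc : Set.uIcc (0 : ℝ) tr = Set.Icc 0 tr := Set.uIcc_of_le htr.le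
  have hfgc : ContinuousOn (fun x => f x * g x) (Set.Icc 0 tr) := hfc.mul hgc
  -- a point where f * g is positive
  have hcpt : ∃ c ∈ Set.Icc (0 : ℝ) tr, 0 < f c * g c := by
    by_contra h
    push_neg at h
    have heq : Set.EqOn (fun x => f x * g x) (fun _ => (0 : ℝ)) (Set.uIcc 0 tr) := by
      intro x hx
      rw [huIcc] at hx
      exact le_antisymm (h x hx) (mul_nonneg (hfnn x hx) (hgnn x hx))
    have : (∫ x in (0 : ℝ)..tr, f x * g x) = 0 := by
      rw [intervalIntegral.integral_congr heq]; simp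
    linarith
  -- positivity and continuity of denominators for feasible C
  have hDpos : ∀ C ∈ feasibleSet tr Λ g, ∀ x ∈ Set.Icc (0 : ℝ) tr,
      0 < (1 + C) / Λ - g x := by
    intro C hC x hx
    exact sub_pos.2 (hC x hx)
  have hcont : ∀ C ∈ feasibleSet tr Λ g,
      ContinuousOn (fun x => f x * g x / ((1 + C) / Λ - g x)) (Set.Icc 0 tr) := by
    intro C hC
    exact hfgc.div (continuousOn_const.sub hgc)
      (fun x hx => (hDpos C hC x hx).ne')
  have hint : ∀ C ∈ feasibleSet tr Λ g,
      IntervalIntegrable (fun x => f x * g x / ((1 + C) / Λ - g x))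
        MeasureTheory.volume 0 tr := by
    intro C hC
    exact (hcont C hC).intervalIntegrable_of_Icc htr.le
  -- strict antitonicity
  have hanti : StrictAntiOn (phiMap tr Λ f g) (feasibleSet tr Λ g) := by
    intro C₁ h₁ C₂ h₂ h12
    have hdiff : 0 < ∫ x in (0 : ℝ)..tr,
        (f x * g x / ((1 + C₁) / Λ - g x) - f x * g x / ((1 + C₂) / Λ - g x)) := by
      apply intervalIntegral.integral_pos htr
      · exact (hcont C₁ h₁).sub (hcont C₂ h₂)
      · intro x hx
        have hx' : x ∈ Set.Icc (0 : ℝ) tr := Set.Ioc_subset_Icc_self hx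
        have h1 := hDpos C₁ h₁ x hx'
        have hle : (1 + C₁) / Λ - g x ≤ (1 + C₂) / Λ - g x := by
          have : (1 + C₁) / Λ ≤ (1 + C₂) / Λ :=
            (div_le_div_iff_of_pos_right hΛ).2 (by linarith)
          linarith
        have := div_le_div_of_nonneg_left (mul_nonneg (hfnn x hx') (hgnn x hx'))
          h1 hle
        linarith
      · obtain ⟨c, hc, hcpos⟩ := hcpt
        refine ⟨c, hc, ?_⟩
        have h1 := hDpos C₁ h₁ c hc
        have h2 := hDpos C₂ h₂ c hc
        have hlt : (1 + C₁) / Λ - g c < (1 + C₂) / Λ - g c := by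
          have : (1 + C₁) / Λ < (1 + C₂) / Λ :=
            (div_lt_div_iff_of_pos_right hΛ).2 (by linarith)
          linarith
        have := div_lt_div_of_pos_left hcpos h1 hlt
        linarith
    rw [intervalIntegral.integral_sub (hint C₁ h₁) (hint C₂ h₂)] at hdiff
    unfold phiMap
    linarith
  refine ⟨hanti, ?_, ?_⟩
  · -- tendsto 0
    obtain ⟨M, hM⟩ := IsCompact.exists_bound_of_continuousOn isCompact_Icc hgc
    have hMg : ∀ x ∈ Set.Icc (0 : ℝ) tr, g x ≤ M := fun x hx =>
      (le_abs_self _).trans (by simpa [Real.norm_eq_abs] using hM x hx)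
    set u : ℝ → ℝ := fun C => (1 + C) / Λ - M with hu
    have hulim : Filter.Tendsto u Filter.atTop Filter.atTop := by
      apply Filter.tendsto_atTop_add_const_right
      apply Filter.Tendsto.atTop_div_const hΛ
      exact Filter.tendsto_atTop_add_const_left _ _ Filter.tendsto_id
    have hub : Filter.Tendsto (fun C => (∫ x in (0:ℝ)..tr, f x * g x) * (u C)⁻¹)
        Filter.atTop (nhds 0) := by
      have := hulim.inv_tendsto_atTop
      simpa using Filter.Tendsto.const_mul (∫ x in (0:ℝ)..tr, f x * g x) this
    have hev : ∀ᶠ C in Filter.atTop,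
        0 ≤ phiMap tr Λ f g C ∧
        phiMap tr Λ f g C ≤ (∫ x in (0:ℝ)..tr, f x * g x) * (u C)⁻¹ := by
      filter_upwards [hulim.eventually_ge_atTop 1] with C huC
      have hfeas : C ∈ feasibleSet tr Λ g := by
        intro x hx
        have := hMg x hx
        have : g x ≤ M := this
        have : M < (1 + C) / Λ := by simp only [hu] at huC; linarith
        linarith [hMg x hx]
      have hden : ∀ x ∈ Set.Icc (0:ℝ) tr, u C ≤ (1 + C) / Λ - g x := by
        intro x hx
        have := hMg x hx
        simp only [hu]
        linarith
      constructor
      · apply intervalIntegral.integral_nonneg htr.le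
        intro x hx
        exact div_nonneg (mul_nonneg (hfnn x hx) (hgnn x hx)) (hDpos C hfeas x hx).le
      · have hmono : (∫ x in (0:ℝ)..tr, f x * g x / ((1 + C) / Λ - g x)) ≤
            ∫ x in (0:ℝ)..tr, f x * g x * (u C)⁻¹ := by
          apply intervalIntegral.integral_mono_on htr.le (hint C hfeas)
          · exact ((hfgc.mul continuousOn_const).intervalIntegrable_of_Icc htr.le)
          · intro x hx
            rw [div_eq_mul_inv]
            apply mul_le_mul_of_nonneg_left _ (mul_nonneg (hfnn x hx) (hgnn x hx))
            exact inv_anti₀ (by linarith) (hden x hx)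
        calc phiMap tr Λ f g C ≤ ∫ x in (0:ℝ)..tr, f x * g x * (u C)⁻¹ := hmono
          _ = (∫ x in (0:ℝ)..tr, f x * g x) * (u C)⁻¹ :=
            intervalIntegral.integral_mul_const _ _
    apply tendsto_of_tendsto_of_tendsto_of_le_of_le' tendsto_const_nhds hub
    · exact hev.mono fun C h => h.1
    · exact hev.mono fun C h => h.2
  · -- uniqueness
    intro C₁ h₁ C₂ h₂ hf₁ hf₂
    by_contra hne
    rcases lt_or_gt_of_ne hne with h | h
    · have := hanti h₁ h₂ h
      rw [hf₁, hf₂] at this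
      linarith
    · have := hanti h₂ h₁ h
      rw [hf₁, hf₂] at this
      linarith
end
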